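/- Let z° ∈ ℝ^n be piecewise linear with samples including the boundary and at least one twin sample (two consecutive indices) in each linear segment. Then z° is sign consistent with respect to this sample set, and hence is a minimizer of min_z ‖Dz‖₁ subject to z_M = z°_M. -/
import Mathlib


/-- The (n-2)×n second-order difference operator: (Dz)_i = z_i - 2 z_{i+1} + z_{i+2}. -/
def Dmat (n : ℕ) : Matrix (Fin (n - 2)) (Fin n) ℝ :=
  fun i j =>
    if (j : ℕ) = (i : ℕ) then 1
    else if (j : ℕ) = (i : ℕ) + 1 then -2
    else if (j : ℕ) = (i : ℕ) + 2 then 1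
    else 0

/-- Curvature of z at (0-based) position k: z_{k-1} - 2 z_k + z_{k+1}, and 0 at the boundary. -/
noncomputable def curv (n : ℕ) (z : Fin n → ℝ) (k : ℕ) : ℝ :=
  if h : 1 ≤ k ∧ k + 1 < n then
    z ⟨k - 1, by omega⟩ - 2 * z ⟨k, by omega⟩ + z ⟨k + 1, h.2⟩
  else 0

/-- 2D sign consistency w.r.t. a sample set M: between any two consecutive samples,
    either all nonzero curvature signs agree, or all interior curvatures vanish. -/
noncomputable def SignConsistent (n : ℕ) (z : Fin n → ℝ) (M : Finset (Fin n)) : Prop :=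
  ∀ i j : Fin n, i ∈ M → j ∈ M → (i : ℕ) < (j : ℕ) →
    (∀ m : Fin n, m ∈ M → ¬((i : ℕ) < (m : ℕ) ∧ (m : ℕ) < (j : ℕ))) →
    ((∀ k h : ℕ, (i : ℕ) ≤ k → k ≤ (j : ℕ) → (i : ℕ) ≤ h → h ≤ (j : ℕ) →
        curv n z k ≠ 0 → curv n z h ≠ 0 →
        Real.sign (curv n z k) = Real.sign (curv n z h)) ∨
     (∀ k : ℕ, (i : ℕ) < k → k < (j : ℕ) → curv n z k = 0))

/-- A corner of z at (0-based, interior) position k. -/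
noncomputable def Corner (n : ℕ) (z : Fin n → ℝ) (k : ℕ) : Prop :=
  curv n z k ≠ 0

/-- A breakpoint: the boundary, or a corner (breakpoints delimit the linear segments). -/
noncomputable def Breakpoint (n : ℕ) (z : Fin n → ℝ) (k : ℕ) : Prop :=
  k = 0 ∨ k = n - 1 ∨ Corner n z k

noncomputable def slp (n : ℕ) (z : Fin n → ℝ) (t : ℕ) : ℝ :=
  if h : t + 1 < n then z ⟨t + 1, h⟩ - z ⟨t, by omega⟩ else 0

lemma curv_zero (n : ℕ) (z : Fin n → ℝ) (k : ℕ) (h : ¬(1 ≤ k ∧ k + 1 < n)) :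
    curv n z k = 0 := dif_neg h

lemma curv_eq_slp (n : ℕ) (z : Fin n → ℝ) (k : ℕ) (h1 : 1 ≤ k) (h2 : k + 1 < n) :
    curv n z k = slp n z k - slp n z (k - 1) := by
  obtain ⟨m, rfl⟩ : ∃ m, k = m + 1 := ⟨k - 1, by omega⟩
  rw [curv, dif_pos ⟨h1, h2⟩, slp, dif_pos h2, slp]
  rw [dif_pos (by omega : m + 1 - 1 + 1 < n)]
  simp only [Nat.add_sub_cancel]
  ring

lemma telescope (n : ℕ) (z : Fin n → ℝ) (t : ℕ) :
    ∀ t', t ≤ t' → t' + 1 < n →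
      ∑ k ∈ Finset.Ico (t + 1) (t' + 1), curv n z k = slp n z t' - slp n z t := by
  intro t'
  induction t' with
  | zero => intro h1 h2; interval_cases t; simp
  | succ m ih =>
    intro h1 h2
    rcases Nat.lt_or_ge t (m + 1) with h | h
    · rw [Finset.sum_Ico_succ_top (by omega), ih (by omega) (by omega),
        curv_eq_slp n z (m + 1) (by omega) h2]
      simp only [Nat.add_sub_cancel]
      ring
    · have : t = m + 1 := by omega
      subst this; simp

lemma slp_eq_of_mem (n : ℕ) (z w : Fin n → ℝ) (M : Finset (Fin n))
    (hw : ∀ i ∈ M, w i = z i) (t : ℕ) (h : t + 1 < n)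
    (h1 : (⟨t, by omega⟩ : Fin n) ∈ M) (h2 : (⟨t + 1, h⟩ : Fin n) ∈ M) :
    slp n w t = slp n z t := by
  rw [slp, slp, dif_pos h, dif_pos h, hw _ h1, hw _ h2]

open Classical in
lemma tail_le (n : ℕ) (hn : 3 ≤ n) (z w : Fin n → ℝ) (M : Finset (Fin n))
    (htwin : ∀ a b : ℕ, a < b → b < n → Breakpoint n z a → Breakpoint n z b →
      (∀ k : ℕ, a < k → k < b → ¬ Breakpoint n z k) →
      ∃ t : ℕ, a ≤ t ∧ t + 1 ≤ b ∧
        (∃ ht : t < n, (⟨t, ht⟩ : Fin n) ∈ M) ∧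
        (∃ ht1 : t + 1 < n, (⟨t + 1, ht1⟩ : Fin n) ∈ M))
    (hw : ∀ i ∈ M, w i = z i) :
    ∀ d t, n - 1 - t ≤ d → ∀ (h : t + 1 < n),
      ((⟨t, by omega⟩ : Fin n) ∈ M) → ((⟨t + 1, h⟩ : Fin n) ∈ M) →
      ∑ k ∈ Finset.Ico (t + 1) (n - 1), |curv n z k| ≤
        ∑ k ∈ Finset.Ico (t + 1) (n - 1), |curv n w k| := by
  intro d
  induction d with
  | zero =>
    intro t hd h _ _
    rw [Finset.Ico_eq_empty (by omega)]
    simp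
  | succ d ih =>
    intro t hd htn htM ht1M
    by_cases hc : ∃ c, t < c ∧ curv n z c ≠ 0
    · have hcsp := Nat.find_spec hc
      set c := Nat.find hc with hcdef
      obtain ⟨htc, hcz⟩ := hcsp
      have hcb : 1 ≤ c ∧ c + 1 < n := by
        by_contra h; exact hcz (curv_zero n z c h)
      have hex2 : ∃ b, c < b ∧ Breakpoint n z b :=
        ⟨n - 1, by omega, Or.inr (Or.inl rfl)⟩
      have hb2sp := Nat.find_spec hex2
      set b2 := Nat.find hex2 with hb2def
      have hb2n : b2 ≤ n - 1 := Nat.find_min' hex2 ⟨by omega, Or.inr (Or.inl rfl)⟩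
      obtain ⟨t', hct', ht'b, ⟨ht'n, ht'M⟩, ⟨ht'1n, ht'1M⟩⟩ :=
        htwin c b2 hb2sp.1 (by omega) (Or.inr (Or.inr hcz)) hb2sp.2
          (fun k h1 h2 hb => Nat.find_min hex2 h2 ⟨h1, hb⟩)
      have htt' : t < t' := lt_of_lt_of_le htc hct'
      have ht'1 : t' + 1 ≤ n - 1 := le_trans ht'b hb2n
      -- only curvature at c in (t, t']
      have huniq : ∀ k, t + 1 ≤ k → k < t' + 1 → k ≠ c → curv n z k = 0 := by
        intro k hk1 hk2 hkc
        by_contra h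
        rcases Nat.lt_or_ge k c with hlt | hge
        · exact Nat.find_min hc hlt ⟨by omega, h⟩
        · exact Nat.find_min hex2 (show k < b2 by omega)
            ⟨by omega, Or.inr (Or.inr h)⟩
      have hcmem : c ∈ Finset.Ico (t + 1) (t' + 1) := Finset.mem_Ico.2 ⟨by omega, by omega⟩
      have hsum1 : ∑ k ∈ Finset.Ico (t + 1) (t' + 1), curv n z k = curv n z c :=
        Finset.sum_eq_single_of_mem c hcmem
          (fun k hk hkc => huniq k (Finset.mem_Ico.1 hk).1 (Finset.mem_Ico.1 hk).2 hkc)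
      have hsum2 : ∑ k ∈ Finset.Ico (t + 1) (t' + 1), |curv n z k| = |curv n z c| :=
        Finset.sum_eq_single_of_mem c hcmem
          (fun k hk hkc => by
            rw [huniq k (Finset.mem_Ico.1 hk).1 (Finset.mem_Ico.1 hk).2 hkc, abs_zero])
      have htel : curv n z c = slp n z t' - slp n z t := by
        rw [← hsum1, telescope n z t t' (by omega) (by omega)]
      have hwmid : |slp n z t' - slp n z t| ≤
          ∑ k ∈ Finset.Ico (t + 1) (t' + 1), |curv n w k| := by
        have h1 : ∑ k ∈ Finset.Ico (t + 1) (t' + 1), curv n w k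
            = slp n w t' - slp n w t := telescope n w t t' (by omega) (by omega)
        have h2 : slp n w t = slp n z t := slp_eq_of_mem n z w M hw t htn htM ht1M
        have h3 : slp n w t' = slp n z t' := slp_eq_of_mem n z w M hw t' ht'1n ht'M ht'1M
        calc |slp n z t' - slp n z t| = |∑ k ∈ Finset.Ico (t + 1) (t' + 1), curv n w k| := by
              rw [h1, h2, h3]
          _ ≤ _ := Finset.abs_sum_le_sum_abs _ _
      have hih := ih t' (by omega) (by omega) ht'M ht'1M
      rw [← Finset.sum_Ico_consecutive _ (show t + 1 ≤ t' + 1 by omega) (show t' + 1 ≤ n - 1 by omega),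
          ← Finset.sum_Ico_consecutive (fun k => |curv n w k|) (show t + 1 ≤ t' + 1 by omega) (show t' + 1 ≤ n - 1 by omega)]
      have : ∑ k ∈ Finset.Ico (t + 1) (t' + 1), |curv n z k| = |slp n z t' - slp n z t| := by
        rw [hsum2, htel]
      rw [this]
      exact add_le_add hwmid hih
    · push_neg at hc
      have : ∑ k ∈ Finset.Ico (t + 1) (n - 1), |curv n z k| = 0 := by
        apply Finset.sum_eq_zero
        intro k hk
        have hk' := Finset.mem_Ico.1 hk
        rw [hc k (by omega), abs_zero]
      rw [this]
      exact Finset.sum_nonneg fun k _ => abs_nonneg _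

open Classical in
lemma signcons (n : ℕ) (hn : 3 ≤ n) (z : Fin n → ℝ) (M : Finset (Fin n))
    (htwin : ∀ a b : ℕ, a < b → b < n → Breakpoint n z a → Breakpoint n z b →
      (∀ k : ℕ, a < k → k < b → ¬ Breakpoint n z k) →
      ∃ t : ℕ, a ≤ t ∧ t + 1 ≤ b ∧
        (∃ ht : t < n, (⟨t, ht⟩ : Fin n) ∈ M) ∧
        (∃ ht1 : t + 1 < n, (⟨t + 1, ht1⟩ : Fin n) ∈ M)) :
    SignConsistent n z M := by
  intro i j hiM hjM hij hcons
  by_cases hc : ∃ c, (i : ℕ) < c ∧ c < (j : ℕ) ∧ curv n z c ≠ 0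
  · left
    obtain ⟨c, hic, hcj, hcz⟩ := hc
    have hcb : 1 ≤ c ∧ c + 1 < n := by by_contra h; exact hcz (curv_zero n z c h)
    set b1 := Nat.findGreatest (fun m => Breakpoint n z m) (c - 1) with hb1def
    have hb1 : Breakpoint n z b1 :=
      Nat.findGreatest_spec (Nat.zero_le _) (Or.inl rfl)
    have hb1c : b1 < c := lt_of_le_of_lt (Nat.findGreatest_le _) (by omega)
    have hb1max : ∀ k, b1 < k → k < c → ¬Breakpoint n z k := fun k h1 h2 =>
      Nat.findGreatest_is_greatest h1 (by omega)
    obtain ⟨t, hb1t, htc, ⟨htn, htM⟩, ⟨ht1n, ht1M⟩⟩ :=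
      htwin b1 c hb1c (by omega) hb1 (Or.inr (Or.inr hcz)) hb1max
    have hb1i : b1 < (i : ℕ) := by
      by_contra h
      push_neg at h
      have H1 : ¬((i : ℕ) < t ∧ t < (j : ℕ)) := hcons ⟨t, htn⟩ htM
      have H2 : ¬((i : ℕ) < t + 1 ∧ t + 1 < (j : ℕ)) := hcons ⟨t + 1, ht1n⟩ ht1M
      omega
    have hex2 : ∃ b, c < b ∧ Breakpoint n z b := ⟨n - 1, by omega, Or.inr (Or.inl rfl)⟩
    have hb2sp := Nat.find_spec hex2
    set b2 := Nat.find hex2 with hb2def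
    have hb2n : b2 ≤ n - 1 := Nat.find_min' hex2 ⟨by omega, Or.inr (Or.inl rfl)⟩
    have hjb2 : (j : ℕ) < b2 := by
      by_contra h
      push_neg at h
      obtain ⟨t', hct', ht'b, ⟨ht'n, ht'M⟩, _⟩ :=
        htwin c b2 hb2sp.1 (by omega) (Or.inr (Or.inr hcz)) hb2sp.2
          (fun k h1 h2 hb => Nat.find_min hex2 h2 ⟨h1, hb⟩)
      have H1 : ¬((i : ℕ) < t' ∧ t' < (j : ℕ)) := hcons ⟨t', ht'n⟩ ht'M
      omega
    have huniq : ∀ k, (i : ℕ) ≤ k → k ≤ (j : ℕ) → curv n z k ≠ 0 → k = c := by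
      intro k h1 h2 hk
      rcases lt_trichotomy k c with hlt | heq | hgt
      · exact absurd (Or.inr (Or.inr hk) : Breakpoint n z k)
          (hb1max k (by omega) hlt)
      · exact heq
      · exact absurd ⟨hgt, Or.inr (Or.inr hk)⟩ (Nat.find_min hex2 (by omega))
    intro k h hik hkj hih hhj hk hh
    rw [huniq k hik hkj hk, huniq h hih hhj hh]
  · right
    intro k h1 h2
    by_contra h
    exact hc ⟨k, h1, h2, h⟩

lemma mulVec_eq (n : ℕ) (hn : 3 ≤ n) (z : Fin n → ℝ) (i : Fin (n - 2)) :
    (Dmat n).mulVec z i = curv n z ((i : ℕ) + 1) := by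
  have hi : (i : ℕ) + 2 < n := by omega
  have h1 : ((i : ℕ) : ℕ) < n := by omega
  have h2 : (i : ℕ) + 1 < n := by omega
  rw [curv, dif_pos ⟨by omega, by omega⟩]
  simp only [Nat.add_sub_cancel]
  simp only [Matrix.mulVec, dotProduct, Dmat]
  have key : ∀ j : Fin n,
      (if (j : ℕ) = (i : ℕ) then (1:ℝ)
       else if (j : ℕ) = (i : ℕ) + 1 then -2
       else if (j : ℕ) = (i : ℕ) + 2 then 1 else 0) * z j
      = (if j = (⟨i, h1⟩ : Fin n) then z j else 0)
        + ((if j = (⟨(i:ℕ)+1, h2⟩ : Fin n) then -2 * z j else 0)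
        + (if j = (⟨(i:ℕ)+2, hi⟩ : Fin n) then z j else 0)) := by
    intro j
    simp only [Fin.ext_iff]
    split_ifs <;> first | omega | ring
  rw [Finset.sum_congr rfl (fun j _ => key j)]
  rw [Finset.sum_add_distrib, Finset.sum_add_distrib,
    Finset.sum_ite_eq', Finset.sum_ite_eq', Finset.sum_ite_eq']
  simp only [Finset.mem_univ, if_true]
  ring

/-- If z° is piecewise linear and the samples include the boundary and a twin sample
    inside each linear segment (between consecutive breakpoints), then z° is sign
    consistent and is a minimizer of ‖Dz‖₁ subject to z_M = z°_M. -/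
theorem stmt14 (n : ℕ) (hn : 3 ≤ n) (z : Fin n → ℝ) (M : Finset (Fin n))
    (hb0 : (⟨0, by omega⟩ : Fin n) ∈ M) (hbn : (⟨n - 1, by omega⟩ : Fin n) ∈ M)
    (htwin : ∀ a b : ℕ, a < b → b < n → Breakpoint n z a → Breakpoint n z b →
      (∀ k : ℕ, a < k → k < b → ¬ Breakpoint n z k) →
      ∃ t : ℕ, a ≤ t ∧ t + 1 ≤ b ∧
        (∃ ht : t < n, (⟨t, ht⟩ : Fin n) ∈ M) ∧
        (∃ ht1 : t + 1 < n, (⟨t + 1, ht1⟩ : Fin n) ∈ M)) :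
    SignConsistent n z M ∧
    ∀ w : Fin n → ℝ, (∀ i ∈ M, w i = z i) →
      ∑ i, |(Dmat n).mulVec z i| ≤ ∑ i, |(Dmat n).mulVec w i| := by
  classical
  refine ⟨signcons n hn z M htwin, ?_⟩
  intro w hw
  have hconv : ∀ v : Fin n → ℝ,
      ∑ i, |(Dmat n).mulVec v i| = ∑ k ∈ Finset.Ico 1 (n - 1), |curv n v k| := by
    intro v
    rw [Finset.sum_Ico_eq_sum_range, show n - 1 - 1 = n - 2 by omega,
      ← Fin.sum_univ_eq_sum_range (fun k => |curv n v (1 + k)|)]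
    exact Finset.sum_congr rfl fun i _ => by rw [mulVec_eq n hn v i, add_comm]
  rw [hconv z, hconv w]
  have hex : ∃ b, 0 < b ∧ Breakpoint n z b := ⟨n - 1, by omega, Or.inr (Or.inl rfl)⟩
  have hpsp := Nat.find_spec hex
  set p := Nat.find hex with hpdef
  have hpn : p ≤ n - 1 := Nat.find_min' hex ⟨by omega, Or.inr (Or.inl rfl)⟩
  obtain ⟨t, h0t, htp, ⟨htn, htM⟩, ⟨ht1n, ht1M⟩⟩ :=
    htwin 0 p hpsp.1 (by omega) (Or.inl rfl) hpsp.2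
      (fun k h1 h2 hb => Nat.find_min hex h2 ⟨h1, hb⟩)
  have hzero : ∀ k, 1 ≤ k → k ≤ t → curv n z k = 0 := by
    intro k h1 h2
    by_contra h
    exact Nat.find_min hex (show k < p by omega) ⟨by omega, Or.inr (Or.inr h)⟩
  have h1 : ∑ k ∈ Finset.Ico 1 (n - 1), |curv n z k|
      = ∑ k ∈ Finset.Ico (t + 1) (n - 1), |curv n z k| := by
    rw [← Finset.sum_Ico_consecutive (fun k => |curv n z k|)
      (show 1 ≤ t + 1 by omega) (show t + 1 ≤ n - 1 by omega)]
    have : ∑ k ∈ Finset.Ico 1 (t + 1), |curv n z k| = 0 := by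
      apply Finset.sum_eq_zero
      intro k hk
      have hk' := Finset.mem_Ico.1 hk
      rw [hzero k (by omega) (by omega), abs_zero]
    rw [this, zero_add]
  rw [h1]
  calc ∑ k ∈ Finset.Ico (t + 1) (n - 1), |curv n z k|
      ≤ ∑ k ∈ Finset.Ico (t + 1) (n - 1), |curv n w k| :=
        tail_le n hn z w M htwin hw (n - 1 - t) t le_rfl (by omega) htM ht1M
    _ ≤ ∑ k ∈ Finset.Ico 1 (n - 1), |curv n w k| :=
        Finset.sum_le_sum_of_subset_of_nonneg
          (Finset.Ico_subset_Ico (by omega) le_rfl)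
          (fun k _ _ => abs_nonneg _)
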